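/- arXiv:2204.05964 — 3 statements merged into one kernel-verified Lean document; each statement's English description precedes it below -/
import Mathlib

section
/- Let f : ℝ → ℝ be the sinc function, f(t) = sin(πt)/(πt) for t ≠ 0 and f(0) = 1, and for n ∈ ℤ^d define φ̂_n : ℝ^d → ℝ by φ̂_n(x) = ∏_{j=1}^d f(n_j + x_j). Then for every multiindex α ∈ ℕ^d there exists a constant C = C(α,d) > 0 such that |∂^α φ̂_n(x)| ≤ C ∏_{j=1}^d (1 + (n_j + x_j)²)^{-1/2} for all n ∈ ℤ^d and all x ∈ ℝ^d. -/
open scoped BigOperators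

/-- The sinc function: `f(t) = sin(πt)/(πt)` for `t ≠ 0` and `f(0) = 1`. -/
noncomputable def sinc (t : ℝ) : ℝ :=
  if t = 0 then 1 else Real.sin (Real.pi * t) / (Real.pi * t)

/-- `φ̂_n(x) = ∏_{j=1}^d f(n_j + x_j)` where `f` is the sinc function. -/
noncomputable def phihat {d : ℕ} (n : Fin d → ℤ) (x : Fin d → ℝ) : ℝ :=
  ∏ j, sinc ((n j : ℝ) + x j)

/-- Partial derivative in the `j`-th coordinate direction. -/
noncomputable def coordDeriv {d : ℕ} {E : Type*} [NormedAddCommGroup E] [NormedSpace ℝ E]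
    (j : Fin d) (g : (Fin d → ℝ) → E) : (Fin d → ℝ) → E :=
  fun x => fderiv ℝ g x (Pi.single j 1)

/-- The multiindex partial derivative `∂^α = ∂^{α_1}_{x_1} ⋯ ∂^{α_d}_{x_d}`. -/
noncomputable def multiDeriv {d : ℕ} {E : Type*} [NormedAddCommGroup E] [NormedSpace ℝ E]
    (α : Fin d → ℕ) (g : (Fin d → ℝ) → E) : (Fin d → ℝ) → E :=
  (List.finRange d).foldr (fun j h => (coordDeriv j)^[α j] h) g






noncomputable def sincNum : ℝ → ℝ := fun t => Real.sin (Real.pi * t) / Real.pi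

lemma analyticAt_rsin (x : ℝ) : AnalyticAt ℝ Real.sin x := by
  have h1 : AnalyticAt ℂ Complex.sin (x : ℂ) :=
    Complex.differentiable_sin.analyticAt _
  have h2 : AnalyticAt ℝ (fun t : ℝ => (Complex.sin (t : ℂ)).re) x :=
    (Complex.reCLM.analyticAt _).comp
      ((h1.restrictScalars).comp (Complex.ofRealCLM.analyticAt x))
  refine h2.congr ?_
  filter_upwards with t
  rw [Complex.sin_ofReal_re]

lemma analyticAt_sincNum (x : ℝ) : AnalyticAt ℝ sincNum x := by
  have : AnalyticAt ℝ (fun t : ℝ => Real.sin (Real.pi * t)) x :=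
    (analyticAt_rsin _).comp (analyticAt_const.mul analyticAt_id)
  exact this.div analyticAt_const (by positivity)

lemma sinc_eq_dslope : sinc = dslope sincNum 0 := by
  funext t
  by_cases h : t = 0
  · subst h
    rw [dslope_same]
    have hd : HasDerivAt sincNum ((Real.cos (Real.pi * 0) * Real.pi) / Real.pi) 0 := by
      exact (((Real.hasDerivAt_sin _).comp 0 ((hasDerivAt_id 0).const_mul Real.pi)).div_const _).congr_deriv (by simp)
    simp [sinc, hd.deriv, Real.pi_ne_zero]
  · rw [dslope_of_ne _ h, slope_def_field, sincNum]
    simp only [sinc, h, if_false, Real.sin_zero, mul_zero]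
    have : sincNum 0 = 0 := by simp [sincNum]
    rw [this]
    field_simp
    ring

lemma analyticAt_sinc (x : ℝ) : AnalyticAt ℝ sinc x := by
  rw [sinc_eq_dslope]
  by_cases h : x = 0
  · subst h
    obtain ⟨p, hp⟩ := analyticAt_sincNum 0
    exact ⟨p.fslope, hp.has_fpower_series_dslope_fslope⟩
  · have h2 : AnalyticAt ℝ (fun z : ℝ => (z - 0)⁻¹ • (sincNum z - sincNum 0)) x := by
      exact ((analyticAt_id.sub analyticAt_const).inv (by simpa using h)).smul
        ((analyticAt_sincNum x).sub analyticAt_const)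
    refine h2.congr ?_
    have : ∀ᶠ z in nhds x, z ≠ 0 := eventually_ne_nhds h
    filter_upwards [this] with z hz
    rw [dslope_of_ne _ hz]; rfl

lemma contDiff_sinc : ContDiff ℝ (⊤ : ℕ∞) sinc := by
  rw [contDiff_iff_contDiffAt]
  exact fun x => (analyticAt_sinc x).contDiffAt

lemma contDiff_inf_sinc : ContDiff ℝ (⊤ : ℕ∞) sinc := by
  rw [contDiff_iff_contDiffAt]
  exact fun x => (analyticAt_sinc x).contDiffAt

lemma smooth_iter (k : ℕ) : ContDiff ℝ (⊤ : ℕ∞) (iteratedDeriv k sinc) := by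
  rw [iteratedDeriv_eq_iterate]
  exact ContDiff.iterate_deriv k contDiff_inf_sinc

lemma sinc_hasDerivAt (k : ℕ) (t : ℝ) :
    HasDerivAt (iteratedDeriv k sinc) (iteratedDeriv (k + 1) sinc t) t := by
  rw [iteratedDeriv_succ]
  exact ((smooth_iter k).differentiable (by simp) t).hasDerivAt

lemma iteratedDeriv_sincNum (m : ℕ) :
    iteratedDeriv m sincNum
      = fun t => Real.pi ^ m * Real.sin (Real.pi * t + m * (Real.pi / 2)) / Real.pi := by
  induction m with
  | zero => funext t; simp [sincNum]
  | succ m IH =>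
    rw [iteratedDeriv_succ, IH]
    funext t
    have h1 : HasDerivAt (fun t : ℝ => Real.pi * t + m * (Real.pi / 2)) Real.pi t := by
      simpa using ((hasDerivAt_id t).const_mul Real.pi).add_const (m * (Real.pi / 2))
    have h2 := (((Real.hasDerivAt_sin _).comp t h1).const_mul (Real.pi ^ m)).div_const Real.pi
    simp only [Function.comp_def] at h2
    rw [h2.deriv]
    have h3 : Real.pi * t + (m + 1 : ℕ) * (Real.pi / 2)
        = (Real.pi * t + m * (Real.pi / 2)) + Real.pi / 2 := by push_cast; ring
    rw [h3, Real.sin_add_pi_div_two]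
    ring

lemma abs_iteratedDeriv_sincNum (m : ℕ) (t : ℝ) :
    |iteratedDeriv m sincNum t| ≤ Real.pi ^ m := by
  rw [iteratedDeriv_sincNum]
  have hπ : (0:ℝ) < Real.pi := Real.pi_pos
  rw [abs_div, abs_mul, abs_of_nonneg (le_of_lt (pow_pos hπ m)), abs_of_nonneg hπ.le]
  rw [div_le_iff₀ hπ]
  calc Real.pi ^ m * |Real.sin _| ≤ Real.pi ^ m * 1 :=
        mul_le_mul_of_nonneg_left (Real.abs_sin_le_one _) (le_of_lt (pow_pos hπ m))
    _ ≤ Real.pi ^ m * Real.pi := by nlinarith [pow_pos hπ m, Real.pi_gt_three]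

lemma sincNum_eq_mul : sincNum = fun t => t * sinc t := by
  funext t
  by_cases h : t = 0
  · simp [h, sincNum]
  · simp only [sinc, sincNum, h, if_false]
    field_simp

lemma iteratedDeriv_sincNum_eq (m : ℕ) :
    iteratedDeriv (m + 1) sincNum = fun t =>
      t * iteratedDeriv (m + 1) sinc t + (m + 1) * iteratedDeriv m sinc t := by
  induction m with
  | zero =>
    funext t
    rw [iteratedDeriv_one, sincNum_eq_mul]
    have h := (hasDerivAt_id t).mul (sinc_hasDerivAt 0 t)
    simp only [id_eq, iteratedDeriv_zero] at h
    rw [(show HasDerivAt (fun t : ℝ => t * sinc t) _ t from h).deriv]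
    simp [iteratedDeriv_zero, iteratedDeriv_one]
    ring
  | succ m IH =>
    funext t
    rw [iteratedDeriv_succ, IH]
    have h := ((hasDerivAt_id t).mul (sinc_hasDerivAt (m + 1) t)).add
      ((sinc_hasDerivAt m t).const_mul ((m : ℝ) + 1))
    simp only [id_eq] at h
    rw [(show HasDerivAt (fun t : ℝ => t * iteratedDeriv (m + 1) sinc t + ((m : ℝ) + 1) * iteratedDeriv m sinc t) _ t from h).deriv]
    push_cast
    ring

lemma abs_sinc_le_one (t : ℝ) : |sinc t| ≤ 1 := by
  by_cases h : t = 0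
  · simp [sinc, h]
  · simp only [sinc, h, if_false, abs_div]
    rw [div_le_one (by positivity : (0:ℝ) < |Real.pi * t|)]
    exact Real.abs_sin_le_abs

lemma abs_mul_sinc_le_one (t : ℝ) : |t * sinc t| ≤ 1 := by
  have := abs_iteratedDeriv_sincNum 0 t
  rw [iteratedDeriv_zero, pow_zero, sincNum_eq_mul] at this
  exact this

lemma sinc_decay (k : ℕ) :
    ∃ A > 0, ∀ t : ℝ, max 1 |t| * |iteratedDeriv k sinc t| ≤ A := by
  induction k with
  | zero =>
    refine ⟨1, one_pos, fun t => ?_⟩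
    rcases le_total |t| 1 with h | h
    · rw [max_eq_left h, one_mul, iteratedDeriv_zero]
      exact abs_sinc_le_one t
    · rw [max_eq_right h, iteratedDeriv_zero, ← abs_mul]
      exact abs_mul_sinc_le_one t
  | succ k IH =>
    obtain ⟨A, hA, hbd⟩ := IH
    obtain ⟨M, hM⟩ := (isCompact_Icc : IsCompact (Set.Icc (-1:ℝ) 1)).exists_bound_of_continuousOn
      ((smooth_iter (k+1)).continuous.continuousOn)
    set B := Real.pi ^ (k+1) + (k+1) * A with hB
    have hBpos : 0 < B := by positivity
    refine ⟨max M B, lt_max_of_lt_right hBpos, fun t => ?_⟩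
    rcases le_total |t| 1 with h | h
    · rw [max_eq_left h, one_mul]
      refine le_trans ?_ (le_max_left M B)
      have ht : t ∈ Set.Icc (-1:ℝ) 1 := abs_le.mp h
      simpa using hM t ht
    · rw [max_eq_right h]
      refine le_trans ?_ (le_max_right M B)
      have hsk : |iteratedDeriv k sinc t| ≤ A := by
        have h1 := hbd t
        have h2 : (1:ℝ) ≤ max 1 |t| := le_max_left _ _
        nlinarith [abs_nonneg (iteratedDeriv k sinc t)]
      have key : t * iteratedDeriv (k+1) sinc t
          = iteratedDeriv (k+1) sincNum t - (k+1) * iteratedDeriv k sinc t := by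
        rw [iteratedDeriv_sincNum_eq k]; ring
      calc |t| * |iteratedDeriv (k+1) sinc t| = |t * iteratedDeriv (k+1) sinc t| :=
            (abs_mul _ _).symm
        _ = |iteratedDeriv (k+1) sincNum t - (k+1) * iteratedDeriv k sinc t| := by rw [key]
        _ ≤ |iteratedDeriv (k+1) sincNum t| + |((k:ℝ)+1) * iteratedDeriv k sinc t| :=
            abs_sub _ _
        _ ≤ Real.pi ^ (k+1) + (k+1) * A := by
            refine add_le_add (abs_iteratedDeriv_sincNum _ _) ?_
            rw [abs_mul, abs_of_nonneg (by positivity : (0:ℝ) ≤ (k:ℝ)+1)]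
            have : ((k:ℝ)+1) ≥ 0 := by positivity
            exact mul_le_mul_of_nonneg_left hsk this
        _ = B := by push_cast [hB]; ring

lemma sinc_factor_bound (k : ℕ) :
    ∃ A > 0, ∀ t : ℝ, |iteratedDeriv k sinc t| ≤ A * (Real.sqrt (1 + t ^ 2))⁻¹ := by
  obtain ⟨A, hA, hbd⟩ := sinc_decay k
  refine ⟨Real.sqrt 2 * A, by positivity, fun t => ?_⟩
  have hs : (0:ℝ) < Real.sqrt (1 + t ^ 2) := Real.sqrt_pos.mpr (by positivity)
  rw [← div_eq_mul_inv, le_div_iff₀ hs]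
  have hm : (0:ℝ) < max 1 |t| := lt_of_lt_of_le one_pos (le_max_left _ _)
  have hsqrt : Real.sqrt (1 + t ^ 2) ≤ Real.sqrt 2 * max 1 |t| := by
    have h1 : (1:ℝ) + t ^ 2 ≤ 2 * (max 1 |t|) ^ 2 := by
      have h2 : (1:ℝ) ≤ (max 1 |t|) ^ 2 := by
        nlinarith [le_max_left (1:ℝ) |t|]
      have h3 : t ^ 2 ≤ (max 1 |t|) ^ 2 := by
        nlinarith [le_max_right (1:ℝ) |t|, abs_nonneg t, sq_abs t]
      linarith
    calc Real.sqrt (1 + t ^ 2) ≤ Real.sqrt (2 * (max 1 |t|) ^ 2) := Real.sqrt_le_sqrt h1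
      _ = Real.sqrt 2 * max 1 |t| := by
          rw [Real.sqrt_mul (by norm_num), Real.sqrt_sq hm.le]
  calc |iteratedDeriv k sinc t| * Real.sqrt (1 + t ^ 2)
      ≤ |iteratedDeriv k sinc t| * (Real.sqrt 2 * max 1 |t|) :=
        mul_le_mul_of_nonneg_left hsqrt (abs_nonneg _)
    _ = Real.sqrt 2 * (max 1 |t| * |iteratedDeriv k sinc t|) := by ring
    _ ≤ Real.sqrt 2 * A := mul_le_mul_of_nonneg_left (hbd t) (Real.sqrt_nonneg 2)



lemma prod_update_eq {d : ℕ} (F : Fin d → ℝ → ℝ) (j : Fin d) (D : ℝ → ℝ) (x : Fin d → ℝ) :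
    (∏ i, Function.update F j D i (x i))
      = D (x j) * ∏ i ∈ Finset.univ.erase j, F i (x i) := by
  have h : ∀ i : Fin d, Function.update F j D i (x i)
      = Function.update (fun i => F i (x i)) j (D (x j)) i := by
    intro i
    by_cases hij : i = j
    · subst hij; simp
    · simp [Function.update_of_ne hij]
  rw [Finset.prod_congr rfl (fun i _ => h i),
    Finset.prod_update_of_mem (Finset.mem_univ j), Finset.erase_eq]

lemma coordDeriv_pi_prod {d : ℕ} (F : Fin d → ℝ → ℝ) (hF : ∀ i, Differentiable ℝ (F i))
    (j : Fin d) :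
    coordDeriv j (fun x : Fin d → ℝ => ∏ i, F i (x i))
      = fun x => ∏ i, Function.update F j (deriv (F j)) i (x i) := by
  funext x
  have hfd : HasFDerivAt (fun x : Fin d → ℝ => ∏ i, F i (x i))
      (∑ i, (∏ k ∈ Finset.univ.erase i, F k (x k)) •
        ((ContinuousLinearMap.smulRight (1 : ℝ →L[ℝ] ℝ) (deriv (F i) (x i))).comp
          (ContinuousLinearMap.proj i))) x := by
    apply HasFDerivAt.finset_prod
    intro i _
    exact ((hF i (x i)).hasDerivAt.hasFDerivAt).comp x (ContinuousLinearMap.hasFDerivAt (ContinuousLinearMap.proj i : (Fin d → ℝ) →L[ℝ] ℝ))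
  rw [coordDeriv, hfd.fderiv]
  rw [ContinuousLinearMap.sum_apply]
  rw [Finset.sum_eq_single j]
  · simp only [ContinuousLinearMap.smul_apply, ContinuousLinearMap.comp_apply,
      ContinuousLinearMap.proj_apply, ContinuousLinearMap.smulRight_apply,
      ContinuousLinearMap.one_apply, Pi.single_eq_same, prod_update_eq, smul_eq_mul]
    ring
  · intro i _ hij
    simp only [ContinuousLinearMap.smul_apply, ContinuousLinearMap.comp_apply,
      ContinuousLinearMap.proj_apply, ContinuousLinearMap.smulRight_apply,
      ContinuousLinearMap.one_apply, smul_eq_mul]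
    rw [Pi.single_eq_of_ne hij]
    ring
  · intro h; exact absurd (Finset.mem_univ j) h

lemma iterate_coordDeriv_prod {d : ℕ} (k : ℕ) (F : Fin d → ℝ → ℝ)
    (hF : ∀ i, ContDiff ℝ (⊤ : ℕ∞) (F i)) (j : Fin d) :
    (coordDeriv j)^[k] (fun x : Fin d → ℝ => ∏ i, F i (x i))
      = fun x => ∏ i, Function.update F j (deriv^[k] (F j)) i (x i) := by
  induction k with
  | zero => simp [Function.update_eq_self]
  | succ k IH =>
    rw [Function.iterate_succ_apply', IH]
    have hG : ∀ i, ContDiff ℝ (⊤ : ℕ∞) (Function.update F j (deriv^[k] (F j)) i) := by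
      intro i
      by_cases hij : i = j
      · subst hij; rw [Function.update_self]; exact ContDiff.iterate_deriv k (hF _)
      · rw [Function.update_of_ne hij]; exact hF i
    rw [coordDeriv_pi_prod _ (fun i => (hG i).differentiable (by simp))]
    funext x
    congr 1
    funext i
    rw [Function.update_self, Function.update_idem, Function.iterate_succ_apply']



lemma foldr_prod {d : ℕ} (α : Fin d → ℕ) :
    ∀ (l : List (Fin d)), l.Nodup → ∀ (F : Fin d → ℝ → ℝ),
      (∀ i, ContDiff ℝ (⊤ : ℕ∞) (F i)) →
      l.foldr (fun j h => (coordDeriv j)^[α j] h) (fun x : Fin d → ℝ => ∏ i, F i (x i))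
        = fun x => ∏ i, (if i ∈ l then deriv^[α i] (F i) else F i) (x i) := by
  intro l
  induction l with
  | nil => intro _ F _; simp
  | cons j t IH =>
    intro hnd F hF
    have hjt : j ∉ t := (List.nodup_cons.mp hnd).1
    have hndt : t.Nodup := (List.nodup_cons.mp hnd).2
    rw [List.foldr_cons, IH hndt F hF]
    set G : Fin d → ℝ → ℝ := fun i => if i ∈ t then deriv^[α i] (F i) else F i with hG
    have hGs : ∀ i, ContDiff ℝ (⊤ : ℕ∞) (G i) := by
      intro i
      rw [hG]
      by_cases hi : i ∈ t
      · simp only [hi, if_true]; exact ContDiff.iterate_deriv _ (hF i)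
      · simp only [hi, if_false]; exact hF i
    rw [iterate_coordDeriv_prod (α j) G hGs j]
    funext x
    congr 1
    funext i
    have hGj : G j = F j := by rw [hG]; simp [hjt]
    by_cases hij : i = j
    · subst hij
      rw [Function.update_self, hGj]
      simp [List.mem_cons]
    · rw [Function.update_of_ne hij, hG]
      simp only [List.mem_cons, hij, false_or]

lemma multiDeriv_prod {d : ℕ} (α : Fin d → ℕ) (F : Fin d → ℝ → ℝ)
    (hF : ∀ i, ContDiff ℝ (⊤ : ℕ∞) (F i)) :
    multiDeriv α (fun x : Fin d → ℝ => ∏ i, F i (x i))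
      = fun x => ∏ i, iteratedDeriv (α i) (F i) (x i) := by
  rw [multiDeriv, foldr_prod α (List.finRange d) (List.nodup_finRange d) F hF]
  funext x
  congr 1
  funext i
  rw [if_pos (List.mem_finRange i), iteratedDeriv_eq_iterate]




/-- For every multiindex `α ∈ ℕ^d` there is a constant `C = C(α,d) > 0` such
that `|∂^α φ̂_n(x)| ≤ C ∏_j (1 + (n_j + x_j)²)^{-1/2}` for all `n ∈ ℤ^d` and `x ∈ ℝ^d`. -/
theorem stmt2 (d : ℕ) (α : Fin d → ℕ) :
    ∃ C > 0, ∀ (n : Fin d → ℤ) (x : Fin d → ℝ),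
      |multiDeriv α (phihat n) x| ≤ C * ∏ j, (Real.sqrt (1 + ((n j : ℝ) + x j) ^ 2))⁻¹ := by
  set A : Fin d → ℝ := fun j => (sinc_factor_bound (α j)).choose with hA
  have hApos : ∀ j, 0 < A j := fun j => (sinc_factor_bound (α j)).choose_spec.1
  have hAbd : ∀ j t, |iteratedDeriv (α j) sinc t| ≤ A j * (Real.sqrt (1 + t ^ 2))⁻¹ :=
    fun j => (sinc_factor_bound (α j)).choose_spec.2
  refine ⟨∏ j, A j, Finset.prod_pos (fun j _ => hApos j), fun n x => ?_⟩
  have hF : ∀ i : Fin d, ContDiff ℝ (⊤ : ℕ∞) (fun t : ℝ => sinc ((n i : ℝ) + t)) :=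
    fun i => contDiff_inf_sinc.comp (contDiff_const.add contDiff_id)
  have hphi : phihat n = fun x : Fin d → ℝ =>
      ∏ i, (fun t : ℝ => sinc ((n i : ℝ) + t)) (x i) := rfl
  rw [hphi, multiDeriv_prod α _ hF]
  have hiter : ∀ (i : Fin d),
      iteratedDeriv (α i) (fun t : ℝ => sinc ((n i : ℝ) + t)) (x i)
        = iteratedDeriv (α i) sinc ((n i : ℝ) + x i) := by
    intro i
    rw [iteratedDeriv_comp_const_add]
  calc |∏ i, iteratedDeriv (α i) (fun t : ℝ => sinc ((n i : ℝ) + t)) (x i)|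
      = ∏ i, |iteratedDeriv (α i) sinc ((n i : ℝ) + x i)| := by
        rw [Finset.abs_prod]
        exact Finset.prod_congr rfl fun i _ => by rw [hiter i]
    _ ≤ ∏ i, A i * (Real.sqrt (1 + ((n i : ℝ) + x i) ^ 2))⁻¹ :=
        Finset.prod_le_prod (fun i _ => abs_nonneg _) (fun i _ => hAbd i _)
    _ = (∏ j, A j) * ∏ j, (Real.sqrt (1 + ((n j : ℝ) + x j) ^ 2))⁻¹ :=
        Finset.prod_mul_distrib
end

section
/- Let f : ℝ → ℝ be the sinc function, f(t) = sin(πt)/(πt) for t ≠ 0 and f(0) = 1, and for n ∈ ℤ^d let φ̂_n(x) = ∏_{j=1}^d f(n_j + x_j). Then for every multiindex α ∈ ℕ^d there exists a constant C = C(α,d) > 0 such that ∑_{n ∈ ℤ^d} ∫_{B_R} |∂^α φ̂_n(x)|² dx ≤ C R^{2d} for every R ≥ 1. -/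
open scoped BigOperators

open MeasureTheory

/-! The `α`-th derivative of `φ̂_n` is `∏ⱼ sinc⁽ᵅʲ⁾(nⱼ + xⱼ)`, and
`sinc⁽ᵏ⁾(t) = πᵏ ∫₀¹ uᵏ cos(πtu + kπ/2) du` is bounded by `πᵏ` and, after one integration by
parts in `u`, by `(k + 2)πᵏ / (π|t|)`; hence `sinc⁽ᵏ⁾(t)² ≲ 1 / (1 + t²)`. As
`∑_{m ∈ ℤ} 1 / (1 + (m + t)²)` is bounded uniformly in `t`, the partial sums of
`∑ₙ |∂^α φ̂_n(x)|²` are bounded uniformly in `x`, and integrating over `B_R ⊆ [-R, R]^d`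
gives a bound of order `R^d`. -/

open Real hiding sinc

lemma abs_intervalIntegral_zero_one_le {f : ℝ → ℝ} {C : ℝ}
    (h : ∀ u ∈ Set.Ioc (0 : ℝ) 1, |f u| ≤ C) : |∫ u in (0 : ℝ)..1, f u| ≤ C := by
  have := intervalIntegral.norm_integral_le_of_norm_le_const (a := 0) (b := 1) (f := f)
    fun u hu => h u (by rwa [Set.uIoc_of_le zero_le_one] at hu)
  rwa [sub_zero, abs_one, mul_one] at this

lemma abs_pow_mul_le_one {u y : ℝ} (k : ℕ) (hu : u ∈ Set.Ioc (0 : ℝ) 1) (hy : |y| ≤ 1) :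
    |u ^ k * y| ≤ 1 := by
  rw [abs_mul, abs_pow, abs_of_pos hu.1]
  exact mul_le_one₀ (pow_le_one₀ hu.1.le hu.2) (abs_nonneg _) hy

lemma abs_integral_pow_mul_cos_le_one (k : ℕ) (ω c : ℝ) :
    |∫ u in (0 : ℝ)..1, u ^ k * cos (ω * u + c)| ≤ 1 :=
  abs_intervalIntegral_zero_one_le fun _ hu => abs_pow_mul_le_one k hu (abs_cos_le_one _)

lemma abs_mul_integral_pow_mul_cos_le (k : ℕ) (ω c : ℝ) :
    |ω * ∫ u in (0 : ℝ)..1, u ^ k * cos (ω * u + c)| ≤ k + 2 := by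
  have hibp := intervalIntegral.integral_mul_deriv_eq_deriv_mul (a := 0) (b := 1)
    (u := fun u : ℝ => u ^ k) (v := fun u => sin (ω * u + c))
    (u' := fun u => k * u ^ (k - 1)) (v' := fun u => ω * cos (ω * u + c))
    (fun u _ => hasDerivAt_pow k u)
    (fun u _ => by simpa [mul_comm] using ((hasDerivAt_mul_const ω).add_const c).sin (x := u))
    (by apply Continuous.intervalIntegrable; fun_prop)
    (by apply Continuous.intervalIntegrable; fun_prop)
  have hboundary : |(1 : ℝ) ^ k * sin (ω * 1 + c) - 0 ^ k * sin (ω * 0 + c)| ≤ 2 := by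
    have h0 : |(0 : ℝ) ^ k * sin (ω * 0 + c)| ≤ 1 := by
      rw [abs_mul, abs_pow, abs_zero]
      exact mul_le_one₀ (pow_le_one₀ le_rfl zero_le_one) (abs_nonneg _) (abs_sin_le_one _)
    rw [one_pow, one_mul]
    linarith [abs_sub (sin (ω * 1 + c)) (0 ^ k * sin (ω * 0 + c)), abs_sin_le_one (ω * 1 + c)]
  have hrest : |∫ u in (0 : ℝ)..1, k * u ^ (k - 1) * sin (ω * u + c)| ≤ k :=
    abs_intervalIntegral_zero_one_le fun _ hu => by
      rw [mul_assoc, abs_mul, Nat.abs_cast]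
      exact mul_le_of_le_one_right k.cast_nonneg (abs_pow_mul_le_one _ hu (abs_sin_le_one _))
  rw [← intervalIntegral.integral_const_mul]
  simp_rw [mul_left_comm ω]
  rw [hibp]
  linarith [abs_sub (1 ^ k * sin (ω * 1 + c) - 0 ^ k * sin (ω * 0 + c))
    (∫ u in (0 : ℝ)..1, k * u ^ (k - 1) * sin (ω * u + c))]

noncomputable def sincDeriv (k : ℕ) (t : ℝ) : ℝ :=
  π ^ k * ∫ u in (0 : ℝ)..1, u ^ k * cos (π * t * u + k * (π / 2))

lemma sincDeriv_zero : sincDeriv 0 = sinc := by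
  funext t
  rcases eq_or_ne t 0 with rfl | ht
  · simp [sincDeriv, sinc]
  · have hπt : π * t ≠ 0 := mul_ne_zero pi_ne_zero ht
    simp only [sincDeriv, sinc, pow_zero, one_mul, CharP.cast_eq_zero, zero_mul, add_zero]
    rw [intervalIntegral.integral_comp_mul_left (fun u => cos u) hπt, integral_cos]
    simp [ht, div_eq_inv_mul]

lemma hasDerivAt_sincDeriv (k : ℕ) (t : ℝ) :
    HasDerivAt (sincDeriv k) (sincDeriv (k + 1) t) t := by
  have hderiv (x u : ℝ) : HasDerivAt (fun x => u ^ k * cos (π * x * u + k * (π / 2)))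
      (π * (u ^ (k + 1) * cos (π * x * u + (k + 1 : ℕ) * (π / 2)))) x := by
    refine (((((hasDerivAt_id' x).const_mul π).mul_const u).add_const (k * (π / 2))).cos
      |>.const_mul (u ^ k)).congr_deriv ?_
    rw [Nat.cast_succ, add_one_mul, ← add_assoc, cos_add_pi_div_two]
    ring
  obtain ⟨-, h⟩ := intervalIntegral.hasDerivAt_integral_of_dominated_loc_of_deriv_le
    (bound := fun _ => π) (a := 0) (b := 1) (μ := volume) (x₀ := t) Filter.univ_mem
    (Filter.Eventually.of_forall fun x => (by fun_prop : Continuous fun u : ℝ =>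
      u ^ k * cos (π * x * u + k * (π / 2))).aestronglyMeasurable)
    (by apply Continuous.intervalIntegrable; fun_prop)
    ((by fun_prop : Continuous fun u : ℝ =>
      π * (u ^ (k + 1) * cos (π * t * u + (k + 1 : ℕ) * (π / 2)))).aestronglyMeasurable)
    (Filter.Eventually.of_forall fun u hu x _ => by
      rw [Set.uIoc_of_le zero_le_one] at hu
      rw [norm_mul, Real.norm_of_nonneg pi_pos.le, Real.norm_eq_abs]
      exact mul_le_of_le_one_right pi_pos.le (abs_pow_mul_le_one _ hu (abs_cos_le_one _)))
    intervalIntegrable_const (Filter.Eventually.of_forall fun u _ x _ => hderiv x u)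
  refine (h.const_mul (π ^ k)).congr_deriv ?_
  rw [sincDeriv, intervalIntegral.integral_const_mul, pow_succ, mul_assoc]

@[fun_prop]
lemma continuous_sincDeriv (k : ℕ) : Continuous (sincDeriv k) :=
  continuous_iff_continuousAt.2 fun t => (hasDerivAt_sincDeriv k t).continuousAt

lemma sincDeriv_sq_le (k : ℕ) (t : ℝ) :
    sincDeriv k t ^ 2 ≤ π ^ (2 * k) * (1 + (k + 2) ^ 2) / (1 + t ^ 2) := by
  set I := ∫ u in (0 : ℝ)..1, u ^ k * cos (π * t * u + k * (π / 2))
  have hI : |I| ≤ 1 := abs_integral_pow_mul_cos_le_one k _ _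
  have htI : |t * I| ≤ k + 2 := by
    refine le_trans ?_ (abs_mul_integral_pow_mul_cos_le k (π * t) (k * (π / 2)))
    rw [mul_assoc, abs_mul π, abs_of_pos pi_pos]
    exact le_mul_of_one_le_left (abs_nonneg _) (by linarith [pi_gt_three])
  have hI_sq : I ^ 2 * (1 + t ^ 2) ≤ 1 + (k + 2) ^ 2 := by
    nlinarith [sq_abs I, sq_abs (t * I), abs_nonneg I, abs_nonneg (t * I)]
  rw [le_div_iff₀ (by positivity), sincDeriv, mul_pow, ← pow_mul, mul_comm k, mul_assoc]
  exact mul_le_mul_of_nonneg_left hI_sq (by positivity)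

section ProductDerivatives

variable {d : ℕ} {D : Fin d → ℕ → ℝ → ℝ}

lemma coordDeriv_prod (hD : ∀ i k t, HasDerivAt (D i k) (D i (k + 1) t) t)
    (m : Fin d → ℕ) (j : Fin d) :
    coordDeriv j (fun x => ∏ i, D i (m i) (x i)) =
      fun x => ∏ i, D i ((m + Pi.single j 1 : Fin d → ℕ) i) (x i) := by
  funext x
  have hfactor (i : Fin d) : HasFDerivAt (fun x : Fin d → ℝ => D i (m i) (x i))
      (D i (m i + 1) (x i) • ContinuousLinearMap.proj i) x :=
    (hD i (m i) (x i)).comp_hasFDerivAt x (hasFDerivAt_apply (𝕜 := ℝ) i x)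
  have h := HasFDerivAt.finsetProd (u := Finset.univ) fun i _ => hfactor i
  rw [coordDeriv, h.fderiv, ← Finset.mul_prod_erase _ _ (Finset.mem_univ j)]
  simp only [_root_.sum_apply, _root_.smul_apply,
    ContinuousLinearMap.proj_apply, Pi.single_apply, smul_eq_mul, mul_ite, mul_one, mul_zero,
    Finset.sum_ite_eq', Finset.mem_univ, if_true, Pi.add_apply]
  rw [mul_comm]
  congr 1
  refine Finset.prod_congr rfl fun i hi => ?_
  rw [if_neg (Finset.ne_of_mem_erase hi), add_zero]


lemma iterate_coordDeriv_prod_s5 (hD : ∀ i k t, HasDerivAt (D i k) (D i (k + 1) t) t)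
    (m : Fin d → ℕ) (j : Fin d) (a : ℕ) :
    (coordDeriv j)^[a] (fun x => ∏ i, D i (m i) (x i)) =
      fun x => ∏ i, D i ((m + Pi.single j a : Fin d → ℕ) i) (x i) := by
  induction a with
  | zero => simp
  | succ a ih =>
    rw [Function.iterate_succ_apply', ih, coordDeriv_prod hD, add_assoc, ← Pi.single_add]

lemma multiDeriv_prod_s5 (hD : ∀ i k t, HasDerivAt (D i k) (D i (k + 1) t) t)
    (m α : Fin d → ℕ) :
    multiDeriv α (fun x => ∏ i, D i (m i) (x i)) =
      fun x => ∏ i, D i ((m + α) i) (x i) := by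
  have hfold (l : List (Fin d)) :
      l.foldr (fun j h => (coordDeriv j)^[α j] h) (fun x => ∏ i, D i (m i) (x i)) =
        fun x => ∏ i, D i ((m + (l.map fun j => Pi.single j (α j)).sum) i) (x i) := by
    induction l with
    | nil => simp
    | cons j l ih =>
      rw [List.foldr_cons, ih, iterate_coordDeriv_prod_s5 hD, List.map_cons, List.sum_cons,
        add_assoc, add_comm (List.sum _)]
  rw [multiDeriv, hfold, ← Fin.sum_univ_def, Finset.univ_sum_single]

end ProductDerivatives

lemma multiDeriv_phihat {d : ℕ} (α : Fin d → ℕ) (n : Fin d → ℤ) :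
    multiDeriv α (phihat n) = fun x => ∏ i, sincDeriv (α i) (n i + x i) := by
  have h0 : phihat n = fun x => ∏ i, sincDeriv ((0 : Fin d → ℕ) i) (n i + x i) := by
    simp only [Pi.zero_apply, sincDeriv_zero]
    rfl
  rw [h0, multiDeriv_prod_s5 (D := fun i k t => sincDeriv k (n i + t))
    (fun i k t => (hasDerivAt_sincDeriv k _).comp_const_add _ t), zero_add]

lemma summable_inv_one_add_sq : Summable fun m : ℤ => (1 + (m : ℝ) ^ 2)⁻¹ := by
  refine Summable.of_norm_bounded_eventually (Real.summable_one_div_int_pow.2 one_lt_two) ?_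
  filter_upwards [Filter.eventually_cofinite_ne 0] with m hm
  have hm_sq : (0 : ℝ) < (m : ℝ) ^ 2 := by positivity
  rw [norm_inv, Real.norm_of_nonneg (by positivity), one_div]
  exact inv_anti₀ hm_sq (by linarith)

lemma inv_one_add_sq_add_le (j : ℤ) {s : ℝ} (hs : s ∈ Set.Icc (0 : ℝ) 1) :
    (1 + (j + s) ^ 2)⁻¹ ≤ (1 + (j : ℝ) ^ 2)⁻¹ + (1 + ((j + 1 : ℤ) : ℝ) ^ 2)⁻¹ := by
  have hnonneg (y : ℝ) : 0 ≤ (1 + y ^ 2)⁻¹ := by positivity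
  have hsq : (j : ℝ) ^ 2 ≤ (j + s) ^ 2 ∨ ((j + 1 : ℤ) : ℝ) ^ 2 ≤ (j + s) ^ 2 := by
    rcases le_or_gt 0 j with hj | hj
    · have : (0 : ℝ) ≤ j := by exact_mod_cast hj
      left; nlinarith [hs.1]
    · have : (j : ℝ) + 1 ≤ 0 := by exact_mod_cast hj
      right; push_cast; nlinarith [hs.2]
  rcases hsq with h | h
  · linarith [inv_anti₀ (by positivity) (by linarith : 1 + (j : ℝ) ^ 2 ≤ 1 + (j + s) ^ 2),
      hnonneg ((j + 1 : ℤ) : ℝ)]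
  · linarith [inv_anti₀ (by positivity) (by linarith : 1 + ((j + 1 : ℤ) : ℝ) ^ 2 ≤ 1 + (j + s) ^ 2),
      hnonneg (j : ℝ)]

lemma sum_inv_one_add_sq_add_le (T : Finset ℤ) (t : ℝ) :
    ∑ m ∈ T, (1 + (m + t) ^ 2)⁻¹ ≤ 2 * ∑' m : ℤ, (1 + (m : ℝ) ^ 2)⁻¹ := by
  set a : ℤ → ℝ := fun m => (1 + (m : ℝ) ^ 2)⁻¹
  have ha : ∀ m, 0 ≤ a m := fun m => by positivity
  have hshift (k : ℤ) : ∑ m ∈ T, a (m + k) ≤ ∑' m, a m := by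
    rw [← (Equiv.addRight k).tsum_eq a]
    exact Summable.sum_le_tsum T (fun m _ => ha _)
      ((Equiv.addRight k).summable_iff.2 summable_inv_one_add_sq)
  have hfract : t - ⌊t⌋ ∈ Set.Icc (0 : ℝ) 1 := ⟨Int.fract_nonneg t, (Int.fract_lt_one t).le⟩
  calc ∑ m ∈ T, (1 + (m + t) ^ 2)⁻¹
      ≤ ∑ m ∈ T, (a (m + ⌊t⌋) + a (m + (⌊t⌋ + 1))) := Finset.sum_le_sum fun m _ => by
        have hm : (m : ℝ) + t = ((m + ⌊t⌋ : ℤ) : ℝ) + (t - ⌊t⌋) := by push_cast; ring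
        rw [hm, ← add_assoc m]
        exact inv_one_add_sq_add_le _ hfract
    _ ≤ 2 * ∑' m, a m := by
        rw [Finset.sum_add_distrib, two_mul]
        exact add_le_add (hshift _) (hshift _)

lemma sum_sincDeriv_sq_le (k : ℕ) (t : ℝ) (T : Finset ℤ) :
    ∑ m ∈ T, sincDeriv k (m + t) ^ 2 ≤
      π ^ (2 * k) * (1 + (k + 2) ^ 2) * (2 * ∑' m : ℤ, (1 + (m : ℝ) ^ 2)⁻¹) := by
  calc ∑ m ∈ T, sincDeriv k (m + t) ^ 2
      ≤ ∑ m ∈ T, π ^ (2 * k) * (1 + (k + 2) ^ 2) * (1 + (m + t) ^ 2)⁻¹ :=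
        Finset.sum_le_sum fun m _ => sincDeriv_sq_le k _
    _ ≤ _ := by
        rw [← Finset.mul_sum]
        exact mul_le_mul_of_nonneg_left (sum_inv_one_add_sq_add_le T t) (by positivity)

lemma sum_prod_le_prod_of_sum_le {ι κ : Type*} [Fintype ι] {q : ι → κ → ℝ}
    {M : ι → ℝ} (hq : ∀ i m, 0 ≤ q i m) (hM : ∀ i (T : Finset κ), ∑ m ∈ T, q i m ≤ M i)
    (s : Finset (ι → κ)) : ∑ n ∈ s, ∏ i, q i (n i) ≤ ∏ i, M i := by
  classical
  calc ∑ n ∈ s, ∏ i, q i (n i)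
      ≤ ∑ n ∈ Fintype.piFinset fun i => s.image (· i), ∏ i, q i (n i) :=
        Finset.sum_le_sum_of_subset_of_nonneg
          (fun n hn => Fintype.mem_piFinset.2 fun i => Finset.mem_image_of_mem _ hn)
          (fun n _ _ => Finset.prod_nonneg fun i _ => hq i (n i))
    _ = ∏ i, ∑ m ∈ s.image (· i), q i m := (Finset.prod_univ_sum _ _).symm
    _ ≤ ∏ i, M i := Finset.prod_le_prod (fun i _ => Finset.sum_nonneg fun m _ => hq i m)
        (fun i _ => hM i _)

lemma summable_integral_and_tsum_le_of_sum_le {ι X : Type*} [MeasurableSpace X] {μ : Measure X}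
    [IsFiniteMeasure μ] {F : ι → X → ℝ} {M : ℝ} (hF_meas : ∀ n, AEStronglyMeasurable (F n) μ)
    (hF_nonneg : ∀ n x, 0 ≤ F n x) (hF_sum : ∀ (s : Finset ι) x, ∑ n ∈ s, F n x ≤ M) :
    Summable (fun n => ∫ x, F n x ∂μ) ∧ ∑' n, ∫ x, F n x ∂μ ≤ M * μ.real Set.univ := by
  classical
  have hint (n : ι) : Integrable (F n) μ := Integrable.of_bound (hF_meas n) M <|
    Filter.Eventually.of_forall fun x => by
      simpa [Real.norm_of_nonneg (hF_nonneg n x)] using hF_sum {n} x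
  have hpartial (s : Finset ι) : ∑ n ∈ s, ∫ x, F n x ∂μ ≤ M * μ.real Set.univ := by
    rw [← integral_finsetSum s fun n _ => hint n, mul_comm, ← smul_eq_mul, ← integral_const]
    exact integral_mono (integrable_finsetSum s fun n _ => hint n) (integrable_const M)
      (hF_sum s)
  have hnonneg : 0 ≤ fun n => ∫ x, F n x ∂μ := fun n => integral_nonneg (hF_nonneg n)
  exact ⟨summable_of_sum_le hnonneg hpartial, Real.tsum_le_of_sum_le hnonneg hpartial⟩

lemma setOf_sum_sq_lt_subset_closedBall {d : ℕ} {R : ℝ} (hR : 0 ≤ R) :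
    {x : Fin d → ℝ | ∑ j, x j ^ 2 < R ^ 2} ⊆ Metric.closedBall 0 R := fun x hx => by
  rw [mem_closedBall_zero_iff, pi_norm_le_iff_of_nonneg hR]
  intro j
  rw [Real.norm_eq_abs, ← sq_le_sq₀ (abs_nonneg _) hR, sq_abs]
  exact ((Finset.single_le_sum (fun i _ => sq_nonneg (x i)) (Finset.mem_univ j)).trans_lt hx).le

lemma volume_setOf_sum_sq_lt_le {d : ℕ} {R : ℝ} (hR : 0 ≤ R) :
    volume {x : Fin d → ℝ | ∑ j, x j ^ 2 < R ^ 2} ≤ ENNReal.ofReal ((2 * R) ^ d) := by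
  simpa [Real.volume_pi_closedBall _ hR] using measure_mono (μ := volume)
    (setOf_sum_sq_lt_subset_closedBall (d := d) hR)

/-- For every multiindex `α ∈ ℕ^d` there is a constant `C = C(α,d) > 0` such
that `∑_{n ∈ ℤ^d} ∫_{B_R} |∂^α φ̂_n(x)|² dx ≤ C R^{2d}` for every `R ≥ 1`, where `B_R` is the
open Euclidean ball of radius `R` centered at the origin in `ℝ^d`. -/
theorem stmt5 (d : ℕ) (α : Fin d → ℕ) :
    ∃ C > 0, ∀ R : ℝ, 1 ≤ R →
      Summable (fun n : Fin d → ℤ =>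
        ∫ x in {x : Fin d → ℝ | ∑ j, x j ^ 2 < R ^ 2}, (multiDeriv α (phihat n) x) ^ 2) ∧
      (∑' n : Fin d → ℤ,
          ∫ x in {x : Fin d → ℝ | ∑ j, x j ^ 2 < R ^ 2}, (multiDeriv α (phihat n) x) ^ 2) ≤
        C * R ^ (2 * d) := by
  set S := ∑' m : ℤ, (1 + (m : ℝ) ^ 2)⁻¹
  have hS : 0 < S := summable_inv_one_add_sq.tsum_pos (fun _ => by positivity) 0 (by positivity)
  set M : Fin d → ℝ := fun i => π ^ (2 * α i) * (1 + (α i + 2) ^ 2) * (2 * S)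
  have hM : 0 < ∏ i, M i := Finset.prod_pos fun i _ => by positivity
  refine ⟨(∏ i, M i) * 2 ^ d, by positivity, fun R hR => ?_⟩
  set B := {x : Fin d → ℝ | ∑ j, x j ^ 2 < R ^ 2}
  have hB : volume B ≤ ENNReal.ofReal ((2 * R) ^ d) := volume_setOf_sum_sq_lt_le (by linarith)
  have : IsFiniteMeasure (volume.restrict B) :=
    isFiniteMeasure_restrict.2 (ne_top_of_le_ne_top ENNReal.ofReal_ne_top hB)
  obtain ⟨hsum, hle⟩ := summable_integral_and_tsum_le_of_sum_le (μ := volume.restrict B)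
    (F := fun n x => multiDeriv α (phihat n) x ^ 2) (M := ∏ i, M i)
    (fun n => by rw [multiDeriv_phihat]; exact (by fun_prop : Continuous _).aestronglyMeasurable)
    (fun _ _ => sq_nonneg _)
    (fun s x => by
      simp_rw [multiDeriv_phihat, ← Finset.prod_pow]
      exact sum_prod_le_prod_of_sum_le (q := fun i (m : ℤ) => sincDeriv (α i) (m + x i) ^ 2)
        (fun _ _ => sq_nonneg _) (fun i T => sum_sincDeriv_sq_le (α i) (x i) T) s)
  refine ⟨hsum, hle.trans ?_⟩
  rw [measureReal_restrict_apply_univ]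
  calc (∏ i, M i) * volume.real B ≤ (∏ i, M i) * (2 * R) ^ d :=
        mul_le_mul_of_nonneg_left (ENNReal.toReal_le_of_le_ofReal (by positivity) hB) hM.le
    _ = (∏ i, M i) * 2 ^ d * R ^ d := by ring
    _ ≤ (∏ i, M i) * 2 ^ d * R ^ (2 * d) := by
        gcongr
        omega
end

section
/- For every c ∈ ℝ, every θ ∈ ℝ, and every sign σ ∈ {+1, −1}, the integrand s ↦ (c sin(s + θ) − σ·2 arctan(sinh s))·sech s is integrable on ℝ and ∫_{−∞}^{∞} (c sin(s + θ) − σ·2 arctan(sinh s)) sech s ds = c π sech(π/2) sin θ. -/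
/-!
Expanding `sin (s + θ)`, everything except `c sin θ · cos s · sech s` is odd and integrates to
zero. The remaining integral is the real part of the Fourier transform of `sech`: the
substitution `x = sigmoid (2t)` turns `∫ e^{iξt} sech t dt` into the Beta integral
`B((1 + iξ)/2, (1 - iξ)/2) = Γ((1 + iξ)/2) Γ((1 - iξ)/2) = π / sin (π (1 + iξ)/2)`,
which is `π sech (πξ/2)`. The same substitution turns the convergence of the Beta integral
into integrability of `e^{iξt} sech t`, hence of `sech`.
-/

open MeasureTheory Set Real
open Complex (I)

theorem Function.Odd.integral_eq_zero {G E : Type*} [MeasurableSpace G] [AddGroup G]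
    [MeasurableNeg G] [NormedAddCommGroup E] [NormedSpace ℝ E] {μ : Measure G}
    [μ.IsNegInvariant] {f : G → E} (hf : f.Odd) : ∫ x, f x ∂μ = 0 := by
  have h := integral_neg_eq_self f μ
  simp only [hf.eq, integral_neg] at h
  have h2 : (2 : ℝ) • ∫ x, f x ∂μ = 0 := by
    rw [two_smul]
    nth_rw 1 [← h]
    exact neg_add_cancel _
  exact (smul_eq_zero.mp h2).resolve_left two_ne_zero

lemma abs_deriv_sigmoid_smul_cpow (a b : ℂ) (u : ℝ) :
    |sigmoid u * (1 - sigmoid u)| •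
        ((sigmoid u : ℂ) ^ (a - 1) * (1 - (sigmoid u : ℂ)) ^ (b - 1)) =
      (sigmoid u : ℂ) ^ a * (sigmoid (-u) : ℂ) ^ b := by
  have hu : (sigmoid u : ℂ) ≠ 0 := by exact_mod_cast (sigmoid_pos u).ne'
  have hu' : (sigmoid (-u) : ℂ) ≠ 0 := by exact_mod_cast (sigmoid_pos (-u)).ne'
  rw [← sigmoid_neg, abs_of_pos (mul_pos (sigmoid_pos u) (sigmoid_pos (-u))),
    show 1 - (sigmoid u : ℂ) = sigmoid (-u) by simp [sigmoid_neg],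
    Complex.cpow_sub _ _ hu, Complex.cpow_sub _ _ hu', Complex.cpow_one, Complex.cpow_one,
    Complex.real_smul]
  push_cast
  field_simp

theorem Complex.betaIntegral_eq_integral_sigmoid (a b : ℂ) :
    betaIntegral a b = ∫ u : ℝ, (sigmoid u : ℂ) ^ a * (sigmoid (-u) : ℂ) ^ b := by
  have h := integral_image_eq_integral_abs_deriv_smul MeasurableSet.univ
    (fun u _ => (hasDerivAt_sigmoid u).hasDerivWithinAt) sigmoid_injective.injOn
    (fun x : ℝ => (x : ℂ) ^ (a - 1) * (1 - (x : ℂ)) ^ (b - 1))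
  rw [image_univ, range_sigmoid, setIntegral_univ] at h
  simp_rw [abs_deriv_sigmoid_smul_cpow] at h
  rw [betaIntegral, intervalIntegral.integral_of_le zero_le_one, integral_Ioc_eq_integral_Ioo,
    h]

theorem Complex.integrable_sigmoid_cpow_mul_sigmoid_neg_cpow {a b : ℂ} (ha : 0 < a.re)
    (hb : 0 < b.re) :
    Integrable fun u : ℝ => (sigmoid u : ℂ) ^ a * (sigmoid (-u) : ℂ) ^ b := by
  have h := integrableOn_image_iff_integrableOn_abs_deriv_smul MeasurableSet.univ
    (fun u _ => (hasDerivAt_sigmoid u).hasDerivWithinAt) sigmoid_injective.injOn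
    (fun x : ℝ => (x : ℂ) ^ (a - 1) * (1 - (x : ℂ)) ^ (b - 1))
  rw [image_univ, range_sigmoid, integrableOn_univ] at h
  simp_rw [abs_deriv_sigmoid_smul_cpow] at h
  rw [← h, ← integrableOn_Ioc_iff_integrableOn_Ioo]
  exact (betaIntegral_convergent ha hb).1

lemma Real.sigmoid_two_mul (t : ℝ) : sigmoid (2 * t) = exp t / (2 * cosh t) := by
  have h : exp t + exp (-t) = exp t * (1 + exp (-(2 * t))) := by
    rw [mul_add, mul_one, ← exp_add]
    ring_nf
  rw [sigmoid_def, cosh_eq, mul_div_cancel₀ _ two_ne_zero, h,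
    div_mul_cancel_left₀ (exp_pos t).ne']

lemma sigmoid_two_mul_cpow_mul_sigmoid_neg_cpow (ξ t : ℝ) :
    (sigmoid (2 * t) : ℂ) ^ ((1 + ξ * I) / 2) * (sigmoid (-(2 * t)) : ℂ) ^ ((1 - ξ * I) / 2) =
      Complex.exp (ξ * t * I) / (2 * cosh t : ℝ) := by
  have hcpow (r : ℝ) (z : ℂ) : (exp r : ℂ) ^ z = Complex.exp (r * z) := by
    rw [Complex.cpow_def_of_ne_zero (by exact_mod_cast (exp_pos r).ne'),
      ← Complex.ofReal_log (exp_pos r).le, log_exp]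
  have hsig (s : ℝ) : sigmoid (2 * s) = exp (s - log (2 * cosh s)) := by
    rw [sigmoid_two_mul, exp_sub, exp_log (by positivity)]
  rw [hsig, ← mul_neg, hsig, cosh_neg, hcpow, hcpow, ← Complex.exp_add]
  conv_rhs =>
    rw [← exp_log (by positivity : 0 < 2 * cosh t), Complex.ofReal_exp, ← Complex.exp_sub]
  congr 1
  push_cast
  ring

theorem Complex.betaIntegral_one_add_mul_I_div_two (ξ : ℝ) :
    betaIntegral ((1 + ξ * I) / 2) ((1 - ξ * I) / 2) = π / (Real.cosh (π * ξ / 2) : ℂ) := by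
  have h := Gamma_mul_Gamma_eq_betaIntegral (s := (1 + ξ * I) / 2) (t := 1 - (1 + ξ * I) / 2)
    (by simp) (by norm_num)
  rw [add_sub_cancel, Gamma_one, one_mul, Gamma_mul_Gamma_one_sub] at h
  rw [show (1 - ξ * I) / 2 = 1 - (1 + ξ * I) / 2 by ring, ← h,
    show (π : ℂ) * ((1 + ξ * I) / 2) = (π * ξ / 2) * I + π / 2 by ring, sin_add_pi_div_two,
    cos_mul_I]
  push_cast
  ring_nf

theorem integral_cexp_mul_I_div_cosh (ξ : ℝ) :
    ∫ t : ℝ, Complex.exp (ξ * t * I) / cosh t = π / cosh (π * ξ / 2) := by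
  have h (t : ℝ) : Complex.exp (ξ * t * I) / cosh t =
      2 * ((sigmoid (2 * t) : ℂ) ^ ((1 + ξ * I) / 2) *
        (sigmoid (-(2 * t)) : ℂ) ^ ((1 - ξ * I) / 2)) := by
    rw [sigmoid_two_mul_cpow_mul_sigmoid_neg_cpow]
    push_cast
    field_simp
  simp_rw [h]
  rw [integral_const_mul, Measure.integral_comp_mul_left
    (fun u => (sigmoid u : ℂ) ^ ((1 + ξ * I) / 2) * (sigmoid (-u) : ℂ) ^ ((1 - ξ * I) / 2)),
    ← Complex.betaIntegral_eq_integral_sigmoid, Complex.betaIntegral_one_add_mul_I_div_two,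
    abs_of_pos (by norm_num : (0 : ℝ) < 2⁻¹), Complex.real_smul, ← mul_assoc]
  norm_num

theorem integrable_cexp_mul_I_div_cosh (ξ : ℝ) :
    Integrable fun t : ℝ => Complex.exp (ξ * t * I) / cosh t := by
  have h := ((Complex.integrable_sigmoid_cpow_mul_sigmoid_neg_cpow (a := (1 + ξ * I) / 2)
    (b := (1 - ξ * I) / 2) (by simp) (by simp)).comp_mul_left' two_ne_zero).const_mul 2
  refine h.congr (ae_of_all _ fun t => ?_)
  dsimp only
  rw [sigmoid_two_mul_cpow_mul_sigmoid_neg_cpow]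
  push_cast
  field_simp

theorem Real.integrable_inv_cosh : Integrable fun t : ℝ => (cosh t)⁻¹ := by
  refine (integrable_cexp_mul_I_div_cosh 0).norm.congr (ae_of_all _ fun t => ?_)
  simp only [Complex.ofReal_zero, zero_mul, Complex.exp_zero, one_div, norm_inv,
    Complex.norm_real, norm_of_nonneg (cosh_pos t).le]

theorem Real.integral_cos_mul_inv_cosh (ξ : ℝ) :
    ∫ t : ℝ, cos (ξ * t) * (cosh t)⁻¹ = π * (cosh (π * ξ / 2))⁻¹ := by
  have h := integral_re (integrable_cexp_mul_I_div_cosh ξ)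
  rw [integral_cexp_mul_I_div_cosh] at h
  have hre (t : ℝ) :
      RCLike.re (Complex.exp (ξ * t * I) / cosh t) = cos (ξ * t) * (cosh t)⁻¹ := by
    rw [RCLike.re_to_complex, Complex.div_ofReal_re, ← Complex.ofReal_mul,
      Complex.exp_ofReal_mul_I_re, div_eq_mul_inv]
  simp_rw [hre, ← Complex.ofReal_div, RCLike.re_to_complex, Complex.ofReal_re] at h
  rw [h, div_eq_mul_inv]

lemma Real.abs_two_mul_arctan_le_pi (x : ℝ) : |2 * arctan x| ≤ π := by
  have h := arctan_mem_Ioo x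
  rw [abs_le]
  constructor <;> linarith [h.1, h.2]

lemma Real.abs_mul_sin_sub_mul_two_mul_arctan_le (a b x y : ℝ) :
    |a * sin x - b * (2 * arctan y)| ≤ |a| + |b| * π := by
  have h_sin : |a * sin x| ≤ |a| := by
    rw [abs_mul]
    exact mul_le_of_le_one_right (abs_nonneg a) (abs_sin_le_one x)
  have h_arctan : |b * (2 * arctan y)| ≤ |b| * π := by
    rw [abs_mul]
    exact mul_le_mul_of_nonneg_left (abs_two_mul_arctan_le_pi y) (abs_nonneg b)
  exact (abs_sub _ _).trans (add_le_add h_sin h_arctan)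

theorem stmt14_general (c θ σ : ℝ) :
    Integrable (fun s : ℝ =>
      (c * Real.sin (s + θ) - σ * (2 * Real.arctan (Real.sinh s))) * (Real.cosh s)⁻¹) ∧
    ∫ s : ℝ, (c * Real.sin (s + θ) - σ * (2 * Real.arctan (Real.sinh s))) * (Real.cosh s)⁻¹ =
      c * Real.pi * (Real.cosh (Real.pi / 2))⁻¹ * Real.sin θ := by
  set odd : ℝ → ℝ := fun s => (c * cos θ * sin s - σ * (2 * arctan (sinh s))) * (cosh s)⁻¹
  have h_split : (fun s => (c * sin (s + θ) - σ * (2 * arctan (sinh s))) * (cosh s)⁻¹) =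
      fun s => c * sin θ * (cos s * (cosh s)⁻¹) + odd s := by
    ext s
    simp only [odd, sin_add]
    ring
  have h_odd : odd.Odd := fun s => by
    simp only [odd, sin_neg, sinh_neg, arctan_neg, cosh_neg]
    ring
  have h_odd_int : Integrable odd := integrable_inv_cosh.bdd_mul (by fun_prop)
    (ae_of_all _ fun s => abs_mul_sin_sub_mul_two_mul_arctan_le _ _ _ _)
  have h_cos_int : Integrable fun s : ℝ => cos s * (cosh s)⁻¹ :=
    integrable_inv_cosh.bdd_mul (by fun_prop) (ae_of_all _ fun s => abs_cos_le_one s)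
  have h_cos : ∫ s : ℝ, cos s * (cosh s)⁻¹ = π * (cosh (π / 2))⁻¹ := by
    simpa using integral_cos_mul_inv_cosh 1
  rw [h_split, integral_add (h_cos_int.const_mul _) h_odd_int, integral_const_mul, h_cos,
    h_odd.integral_eq_zero]
  exact ⟨(h_cos_int.const_mul _).add h_odd_int, by ring⟩

/-- For every `c ∈ ℝ`, `θ ∈ ℝ` and sign `σ ∈ {+1, −1}`, the function
`s ↦ (c sin(s + θ) − σ·2 arctan(sinh s))·sech s` is integrable on `ℝ` and
`∫_{−∞}^{∞} (c sin(s + θ) − σ·2 arctan(sinh s)) sech s ds = c π sech(π/2) sin θ`. -/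
theorem stmt14 (c θ σ : ℝ) (hσ : σ = 1 ∨ σ = -1) :
    Integrable (fun s : ℝ =>
      (c * Real.sin (s + θ) - σ * (2 * Real.arctan (Real.sinh s))) * (Real.cosh s)⁻¹) ∧
    ∫ s : ℝ, (c * Real.sin (s + θ) - σ * (2 * Real.arctan (Real.sinh s))) * (Real.cosh s)⁻¹ =
      c * Real.pi * (Real.cosh (Real.pi / 2))⁻¹ * Real.sin θ :=
  stmt14_general c θ σ
end
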